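/- For every a > 0, the derivative of the Hurwitz zeta function at s = 0 satisfies ∂ζ/∂s(0, a) = log Γ(a) − (1/2) log(2π) (Lerch's formula). -/

import Mathlib

/-!
Euler–Maclaurin summation to second order, with the Peano kernel `Q(x) = ({x}² - {x}) / 2` of the
trapezoidal rule, continues `∑ₙ (n + b) ^ (-s)` (for `b > 0`) to `-1 < re s` as
`b ^ (1 - s) / (s - 1) + b ^ (-s) / 2 - s (s + 1) ∫_b^∞ Q(x - b) x ^ (-s - 2) dx`.
By the identity theorem `F(s) = ∑_{k<N} (a + k) ^ (-s) + (that expression at b = a + N)` near `0`,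
so for every `N`
`F'(0) = (b - 1/2) log b - b - ∑_{k<N} log (a + k) - ∫_b^∞ Q(x - b) x⁻² dx` with `b = a + N`.
The integral is `O(1/b)`, and Gauss's product for `Γ` together with Stirling's formula for `N!`
identify the limit of the rest as `N → ∞`.
-/

open MeasureTheory Set Filter Topology

noncomputable section

namespace Lerch

/-- The Peano kernel of the trapezoidal rule with nodes at the integers. -/
def trapezoidKernel (x : ℝ) : ℝ := (Int.fract x ^ 2 - Int.fract x) / 2

lemma abs_trapezoidKernel_le (x : ℝ) : |trapezoidKernel x| ≤ 8⁻¹ := by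
  have h₀ := Int.fract_nonneg x
  have h₁ := Int.fract_lt_one x
  rw [abs_le, trapezoidKernel]
  constructor <;> nlinarith [sq_nonneg (2 * Int.fract x - 1)]

lemma measurable_trapezoidKernel : Measurable trapezoidKernel :=
  ((measurable_fract.pow_const 2).sub measurable_fract).div_const 2

lemma trapezoidKernel_sub_natCast (x : ℝ) (n : ℕ) :
    trapezoidKernel (x - n) = trapezoidKernel x := by
  simp only [trapezoidKernel, Int.fract_sub_natCast]

lemma trapezoidKernel_sub_of_mem_Icc {t x : ℝ} (hx : x ∈ Icc t (t + 1)) :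
    trapezoidKernel (x - t) = ((x - t) ^ 2 - (x - t)) / 2 := by
  rcases eq_or_lt_of_le hx.2 with rfl | hlt
  · simp [trapezoidKernel]
  · rw [trapezoidKernel, Int.fract_eq_self.mpr ⟨by linarith [hx.1], by linarith⟩]

section EulerMaclaurin

variable {E : Type*} [NormedAddCommGroup E] [NormedSpace ℝ E] [CompleteSpace E]
  {f f' f'' : ℝ → E}

theorem trapezoid_eq_integral_sub_integral_trapezoidKernel {t : ℝ}
    (hf : ∀ x ∈ Icc t (t + 1), HasDerivAt f (f' x) x)
    (hf' : ∀ x ∈ Icc t (t + 1), HasDerivAt f' (f'' x) x)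
    (hf'' : ContinuousOn f'' (Icc t (t + 1))) :
    (2 : ℝ)⁻¹ • (f t + f (t + 1)) =
      (∫ x in t..t + 1, f x) - ∫ x in t..t + 1, trapezoidKernel (x - t) • f'' x := by
  set q : ℝ → ℝ := fun x => ((x - t) ^ 2 - (x - t)) / 2
  have hIcc : uIcc t (t + 1) = Icc t (t + 1) := uIcc_of_le (by linarith)
  have hq : ∀ x, HasDerivAt q (x - t - 2⁻¹) x := fun x =>
    ((((hasDerivAt_id' x).sub_const t).pow 2).sub ((hasDerivAt_id' x).sub_const t)).div_const 2
      |>.congr_deriv (by ring)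
  have hlin : ∀ x, HasDerivAt (fun x : ℝ => x - t - 2⁻¹) 1 x := fun x =>
    ((hasDerivAt_id x).sub_const t).sub_const _
  have hG : ∀ x ∈ uIcc t (t + 1), HasDerivAt
      (fun x => (x - t - 2⁻¹) • f x - q x • f' x) (f x - q x • f'' x) x := by
    intro x hx
    rw [hIcc] at hx
    convert ((hlin x).fun_smul (hf x hx)).fun_sub ((hq x).fun_smul (hf' x hx)) using 1
    rw [one_smul]; abel
  have hcont : ContinuousOn (fun x => f x - q x • f'' x) (uIcc t (t + 1)) := by
    rw [hIcc]
    exact (HasDerivAt.continuousOn hf).sub ((by fun_prop : Continuous q).continuousOn.smul hf'')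
  have hkernel : ∫ x in t..t + 1, trapezoidKernel (x - t) • f'' x = ∫ x in t..t + 1, q x • f'' x :=
    intervalIntegral.integral_congr fun x hx => by
      rw [hIcc] at hx
      simp only [trapezoidKernel_sub_of_mem_Icc hx, q]
  rw [hkernel, ← intervalIntegral.integral_sub, intervalIntegral.integral_eq_sub_of_hasDerivAt hG
      hcont.intervalIntegrable]
  · simp only [q]; norm_num; module
  · exact (HasDerivAt.continuousOn hf).intervalIntegrable_of_Icc (by linarith)
  · exact ((by fun_prop : Continuous q).continuousOn.smul hf'').intervalIntegrable_of_Icc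
      (by linarith)

theorem sum_range_eq_integral_sub_integral_trapezoidKernel {b : ℝ} {N : ℕ}
    (hf : ∀ x ∈ Icc b (b + N), HasDerivAt f (f' x) x)
    (hf' : ∀ x ∈ Icc b (b + N), HasDerivAt f' (f'' x) x)
    (hf'' : ContinuousOn f'' (Icc b (b + N))) :
    ∑ k ∈ Finset.range N, f (b + k) =
      (∫ x in b..b + N, f x) - (∫ x in b..b + N, trapezoidKernel (x - b) • f'' x)
        - (2 : ℝ)⁻¹ • (f (b + N) - f b) := by
  have hsub : ∀ k < N, Icc (b + k) (b + (k + 1 : ℕ)) ⊆ Icc b (b + N) := fun k hk =>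
    Icc_subset_Icc (by simp) (by simp; exact_mod_cast hk)
  have hstep : ∀ k < N, (2 : ℝ)⁻¹ • (f (b + k) + f (b + (k + 1 : ℕ))) =
      (∫ x in b + k..b + (k + 1 : ℕ), f x)
        - ∫ x in b + k..b + (k + 1 : ℕ), trapezoidKernel (x - b) • f'' x := by
    intro k hk
    have h := trapezoid_eq_integral_sub_integral_trapezoidKernel (t := b + k)
      (fun x hx => hf x (hsub k hk (by simpa [add_assoc] using hx)))
      (fun x hx => hf' x (hsub k hk (by simpa [add_assoc] using hx)))
      (hf''.mono fun x hx => hsub k hk (by simpa [add_assoc] using hx))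
    simp only [sub_add_eq_sub_sub, trapezoidKernel_sub_natCast] at h
    simpa [add_assoc] using h
  have hbN : b ≤ b + N := by simp
  have hfi : IntervalIntegrable f volume b (b + N) :=
    (HasDerivAt.continuousOn hf).intervalIntegrable_of_Icc hbN
  have hKi : IntervalIntegrable (fun x => trapezoidKernel (x - b) • f'' x) volume b (b + N) := by
    have hi := hf''.intervalIntegrable_of_Icc (μ := volume) hbN
    have hK : AEStronglyMeasurable (fun x => trapezoidKernel (x - b)) volume :=
      (measurable_trapezoidKernel.comp (measurable_id.sub_const b)).aestronglyMeasurable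
    have hbdd : ∀ᵐ x, ‖trapezoidKernel (x - b)‖ ≤ 8⁻¹ :=
      ae_of_all _ fun x => abs_trapezoidKernel_le _
    exact ⟨hi.1.bdd_smul _ hK.restrict (ae_restrict_of_ae hbdd),
      hi.2.bdd_smul _ hK.restrict (ae_restrict_of_ae hbdd)⟩
  have hpieces : ∀ {g : ℝ → E}, IntervalIntegrable g volume b (b + N) →
      ∀ k < N, IntervalIntegrable g volume (b + k) (b + (k + 1 : ℕ)) := fun hg k hk =>
    hg.mono_set (by simpa [uIcc_of_le hbN, uIcc_of_le] using hsub k hk)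
  have htrap : ∑ k ∈ Finset.range N, (2 : ℝ)⁻¹ • (f (b + k) + f (b + (k + 1 : ℕ))) =
      ∑ k ∈ Finset.range N, f (b + k) + (2 : ℝ)⁻¹ • (f (b + N) - f b) := by
    have htel := Finset.sum_range_sub (fun k : ℕ => f (b + k)) N
    simp only [Nat.cast_zero, add_zero] at htel
    rw [← htel, Finset.smul_sum, ← Finset.sum_add_distrib]
    exact Finset.sum_congr rfl fun k _ => by module
  have hadj := fun {g : ℝ → E} (hg : IntervalIntegrable g volume b (b + N)) => by
    simpa only [Nat.cast_zero, add_zero] using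
      intervalIntegral.sum_integral_adjacent_intervals (a := fun k : ℕ => b + k) (hpieces hg)
  rw [← hadj hfi, ← hadj hKi, ← Finset.sum_sub_distrib,
    ← Finset.sum_congr rfl fun k hk => hstep k (Finset.mem_range.1 hk), htrap]
  abel

end EulerMaclaurin

section AnalyticContinuation

open Complex

lemma eventuallyEq_nhds_zero_of_eq_of_one_lt_re {g h : ℂ → ℂ}
    (hg : ∀ s : ℂ, -1 < s.re → s ≠ 1 → DifferentiableAt ℂ g s)
    (hh : ∀ s : ℂ, -1 < s.re → s ≠ 1 → DifferentiableAt ℂ h s)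
    (heq : ∀ s : ℂ, 1 < s.re → g s = h s) : g =ᶠ[𝓝 0] h := by
  -- The half-plane `-1 < re s` slit along `[1, ∞)` is star-shaped about `0`, hence connected.
  set U : Set ℂ := {s | -1 < s.re} ∩ (fun s => 1 - s) ⁻¹' slitPlane
  have hUo : IsOpen U := (isOpen_lt continuous_const continuous_re).inter
    (isOpen_slitPlane.preimage (continuous_const.sub continuous_id))
  have hU₁ : ∀ s ∈ U, s ≠ 1 := fun s hs h₁ => slitPlane_ne_zero hs.2 (by simp [h₁])
  have h₀ : (0 : ℂ) ∈ U := ⟨by simp, by simp⟩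
  have hz : 2 + I ∈ U := ⟨by simp; norm_num, by simp [mem_slitPlane_iff]⟩
  have hstar : StarConvex ℝ 0 U := by
    refine ((convex_halfSpace_re_gt (-1)).starConvex h₀.1).inter fun y hy a c ha hc hac => ?_
    have := starConvex_one_slitPlane hy ha hc hac
    simp only [mem_preimage, smul_zero, zero_add] at this ⊢
    rwa [smul_sub, ← add_sub_assoc, ← add_smul, hac, one_smul] at this
  have hana : ∀ f : ℂ → ℂ, (∀ s : ℂ, -1 < s.re → s ≠ 1 → DifferentiableAt ℂ f s) →
      AnalyticOnNhd ℂ f U := fun f hf =>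
    DifferentiableOn.analyticOnNhd (fun s hs => (hf s hs.1 (hU₁ s hs)).differentiableWithinAt) hUo
  have hEq := (hana g hg).eqOn_of_preconnected_of_eventuallyEq (hana h hh)
    (hstar.isPathConnected h₀).isConnected.isPreconnected hz <| by
      filter_upwards [(isOpen_lt continuous_const continuous_re).mem_nhds
        (show (1 : ℝ) < (2 + I).re by simp)] with s hs using heq s hs
  filter_upwards [hUo.mem_nhds h₀] with s hs using hEq hs

end AnalyticContinuation

/-- The integral converges only for `-1 < re s`; elsewhere this is the junk value `0`. -/
def hurwitzRemainder (b : ℝ) (s : ℂ) : ℂ :=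
  ∫ x in Ioi b, (trapezoidKernel (x - b) : ℂ) * (x : ℂ) ^ (-s - 2)

/-- The second-order Euler–Maclaurin expression for `∑ₙ (n + b) ^ (-s)`, which makes sense for
`-1 < re s`. -/
def hurwitzContinuation (b : ℝ) (s : ℂ) : ℂ :=
  (b : ℂ) ^ (1 - s) / (s - 1) + (b : ℂ) ^ (-s) / 2 - s * (s + 1) * hurwitzRemainder b s

section Hurwitz

open Complex

variable {b : ℝ} {s : ℂ}

lemma integrableOn_trapezoidKernel_mul_cpow (hb : 0 < b) (hs : s.re < -1) :
    IntegrableOn (fun x : ℝ => (trapezoidKernel (x - b) : ℂ) * (x : ℂ) ^ s) (Ioi b) :=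
  (integrableOn_Ioi_cpow_of_lt hs hb).bdd_mul
    ((measurable_ofReal.comp (measurable_trapezoidKernel.comp
      (measurable_id.sub_const b))).aestronglyMeasurable)
    (ae_of_all _ fun x => by simpa using abs_trapezoidKernel_le (x - b))

lemma sum_range_cpow_eq_integral_sub (hb : 0 < b) (hs₀ : s ≠ 0) (hs₁ : s ≠ -1) (N : ℕ) :
    ∑ k ∈ Finset.range N, ((b + k : ℝ) : ℂ) ^ (-s) =
      (∫ x in b..b + N, (x : ℂ) ^ (-s))
        - (∫ x in b..b + N, (trapezoidKernel (x - b) : ℂ) * (s * (s + 1) * (x : ℂ) ^ (-s - 2)))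
        - (((b + N : ℝ) : ℂ) ^ (-s) - (b : ℂ) ^ (-s)) / 2 := by
  have hpos : ∀ x ∈ Icc b (b + N), 0 < x := fun x hx => hb.trans_le hx.1
  have hs₁' : -s - 1 ≠ 0 := fun h => hs₁ (by linear_combination -h)
  have h := sum_range_eq_integral_sub_integral_trapezoidKernel (N := N)
    (f := fun x : ℝ => (x : ℂ) ^ (-s)) (f' := fun x : ℝ => -s * (x : ℂ) ^ (-s - 1))
    (f'' := fun x : ℝ => s * (s + 1) * (x : ℂ) ^ (-s - 2))
    (fun x hx => hasDerivAt_ofReal_cpow_const (hpos x hx).ne' (neg_ne_zero.mpr hs₀))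
    (fun x hx => ((hasDerivAt_ofReal_cpow_const (hpos x hx).ne' hs₁').const_mul (-s)).congr_deriv
      (by ring_nf))
    (fun x hx => ((continuousAt_ofReal_cpow_const x _ (.inr (hpos x hx).ne')).const_mul
      _).continuousWithinAt)
  simp only [real_smul] at h
  rw [h]
  push_cast
  ring

theorem tendsto_sum_range_cpow_hurwitzContinuation (hb : 0 < b) (hs : 1 < s.re) :
    Tendsto (fun N : ℕ => ∑ k ∈ Finset.range N, ((b + k : ℝ) : ℂ) ^ (-s)) atTop
      (𝓝 (hurwitzContinuation b s)) := by
  have hs₀ : s ≠ 0 := fun h => by subst h; norm_num at hs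
  have hs₁ : s ≠ -1 := fun h => by subst h; norm_num at hs
  have htop : Tendsto (fun N : ℕ => b + N) atTop atTop :=
    tendsto_atTop_add_const_left _ b tendsto_natCast_atTop_atTop
  have hmain : Tendsto (fun N : ℕ => ∫ x in b..b + N, (x : ℂ) ^ (-s)) atTop
      (𝓝 ((b : ℂ) ^ (1 - s) / (s - 1))) := by
    have h := intervalIntegral_tendsto_integral_Ioi b
      (integrableOn_Ioi_cpow_of_lt (a := -s) (by simp; linarith) hb) htop
    rwa [integral_Ioi_cpow_of_lt (by simp; linarith) hb, show -s + 1 = -(s - 1) by ring,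
      div_neg, neg_div, neg_neg, neg_sub] at h
  have hrem : Tendsto (fun N : ℕ => ∫ x in b..b + N,
      (trapezoidKernel (x - b) : ℂ) * (s * (s + 1) * (x : ℂ) ^ (-s - 2))) atTop
      (𝓝 (s * (s + 1) * hurwitzRemainder b s)) := by
    have h := intervalIntegral_tendsto_integral_Ioi b
      (integrableOn_trapezoidKernel_mul_cpow hb (s := -s - 2) (by simp; linarith)) htop
    simp only [mul_left_comm _ (s * (s + 1)), intervalIntegral.integral_const_mul]
    exact h.const_mul _
  have hlast : Tendsto (fun N : ℕ => ((b + N : ℝ) : ℂ) ^ (-s)) atTop (𝓝 0) := by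
    refine squeeze_zero_norm (fun N => le_of_eq ?_)
      ((tendsto_rpow_neg_atTop (by linarith : 0 < s.re)).comp htop)
    rw [norm_cpow_eq_rpow_re_of_pos (by positivity), neg_re, Function.comp_apply]
  simp only [sum_range_cpow_eq_integral_sub hb hs₀ hs₁]
  convert (hmain.sub hrem).sub ((hlast.sub_const _).div_const 2) using 2
  simp only [hurwitzContinuation]
  ring

lemma hurwitzRemainder_eq_mellin (hb : 0 ≤ b) (s : ℂ) :
    hurwitzRemainder b s =
      mellin ((Ioi b).indicator fun x => (trapezoidKernel (x - b) : ℂ)) (-s - 1) := by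
  rw [mellin, hurwitzRemainder]
  simp_rw [← indicator_smul_apply (Ioi b) (fun x : ℝ => (x : ℂ) ^ (-s - 1 - 1))]
  rw [setIntegral_indicator measurableSet_Ioi, Ioi_inter_Ioi, max_eq_right hb]
  simp_rw [smul_eq_mul, mul_comm, sub_sub, show (1 : ℂ) + 1 = 2 by norm_num]

lemma differentiableAt_hurwitzRemainder (hb : 0 < b) (hs : -1 < s.re) :
    DifferentiableAt ℂ (hurwitzRemainder b) s := by
  set g := (Ioi b).indicator fun x => (trapezoidKernel (x - b) : ℂ)
  have hg : ∀ x, ‖g x‖ ≤ 8⁻¹ := fun x => by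
    by_cases hx : x ∈ Ioi b
    · simpa [g, hx] using abs_trapezoidKernel_le (x - b)
    · simp [g, hx]
  have hmeas : Measurable g := (measurable_ofReal.comp (measurable_trapezoidKernel.comp
      (measurable_id.sub_const b))).indicator measurableSet_Ioi
  have hloc : LocallyIntegrableOn g (Ioi 0) :=
    ((memLp_top_of_bound hmeas.aestronglyMeasurable _ (ae_of_all _ hg)).locallyIntegrable
      le_top).locallyIntegrableOn _
  have htop : g =O[atTop] (· ^ (-(0 : ℝ))) :=
    Asymptotics.IsBigO.of_bound 8⁻¹ <| (eventually_gt_atTop 0).mono fun x hx => by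
      simpa [Real.rpow_zero] using hg x
  have hbot : g =O[𝓝[>] 0] (· ^ (-(-s - 2).re)) := by
    refine (Asymptotics.isBigO_zero _ _).congr' ?_ EventuallyEq.rfl
    filter_upwards [Ioo_mem_nhdsGT hb] with x hx
    simp [g, hx.2.le]
  have hmellin := mellin_differentiableAt_of_isBigO_rpow (s := -s - 1) hloc htop
    (by simp; linarith) hbot (by simp)
  rw [show hurwitzRemainder b = fun s => mellin g (-s - 1) from
    funext (hurwitzRemainder_eq_mellin hb.le)]
  exact hmellin.comp (g := mellin g) s (by fun_prop)

lemma differentiableAt_hurwitzContinuation (hb : 0 < b) (hs : -1 < s.re) (hs₁ : s ≠ 1) :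
    DifferentiableAt ℂ (hurwitzContinuation b) s := by
  have hb' : (b : ℂ) ≠ 0 := ofReal_ne_zero.mpr hb.ne'
  have hK := differentiableAt_hurwitzRemainder hb hs
  unfold hurwitzContinuation
  refine ((((differentiableAt_const _).sub differentiableAt_id).const_cpow (.inl hb')).div
    (differentiableAt_id.sub_const 1) (sub_ne_zero.mpr hs₁)).add
    ((differentiableAt_id.neg.const_cpow (.inl hb')).div_const 2) |>.sub ?_
  fun_prop

lemma hasDerivAt_hurwitzContinuation_zero (hb : 0 < b) :
    HasDerivAt (hurwitzContinuation b)
      (((b * Real.log b - b - Real.log b / 2 : ℝ) : ℂ) - hurwitzRemainder b 0) 0 := by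
  have hb' : (b : ℂ) ≠ 0 := ofReal_ne_zero.mpr hb.ne'
  have hpow₁ := ((hasDerivAt_const (0 : ℂ) (1 : ℂ)).sub (hasDerivAt_id' 0)).const_cpow
    (c := (b : ℂ)) (.inl hb')
  have hpow₂ := (hasDerivAt_id' (0 : ℂ)).neg.const_cpow (c := (b : ℂ)) (.inl hb')
  have hK := (differentiableAt_hurwitzRemainder hb (s := 0) (by norm_num)).hasDerivAt
  have h : HasDerivAt (hurwitzContinuation b) _ 0 :=
    ((hpow₁.div ((hasDerivAt_id' (0 : ℂ)).sub_const 1) (by norm_num)).add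
      (hpow₂.div_const 2)).sub (((hasDerivAt_id' (0 : ℂ)).mul
        ((hasDerivAt_id' 0).add_const 1)).mul hK)
  refine h.congr_deriv ?_
  simp only [Pi.sub_apply, Pi.neg_apply, Pi.mul_apply, sub_zero, neg_zero, cpow_one, cpow_zero,
    ← ofReal_log hb.le]
  push_cast
  ring

lemma norm_hurwitzRemainder_zero_le (hb : 0 < b) : ‖hurwitzRemainder b 0‖ ≤ (8 * b)⁻¹ := by
  have hbound : ∀ x ∈ Ioi b,
      ‖(trapezoidKernel (x - b) : ℂ) * (x : ℂ) ^ (-0 - 2 : ℂ)‖ ≤ 8⁻¹ * x ^ (-2 : ℝ) := by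
    intro x hx
    rw [norm_mul, norm_real, norm_cpow_eq_rpow_re_of_pos (hb.trans hx)]
    simpa using mul_le_mul_of_nonneg_right (abs_trapezoidKernel_le (x - b))
      (Real.rpow_nonneg (hb.trans hx).le (-2))
  calc ‖hurwitzRemainder b 0‖ ≤ ∫ x in Ioi b, 8⁻¹ * x ^ (-2 : ℝ) :=
        norm_integral_le_of_norm_le ((integrableOn_Ioi_rpow_of_lt (by norm_num) hb).const_mul _)
          ((ae_restrict_iff' measurableSet_Ioi).mpr (ae_of_all _ hbound))
    _ = (8 * b)⁻¹ := by
      rw [integral_const_mul, integral_Ioi_rpow_of_lt (by norm_num) hb]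
      norm_num [Real.rpow_neg_one, mul_comm]

lemma tendsto_hurwitzRemainder_zero_atTop :
    Tendsto (fun b => hurwitzRemainder b 0) atTop (𝓝 0) :=
  squeeze_zero_norm' ((eventually_gt_atTop 0).mono fun _ hb => norm_hurwitzRemainder_zero_le hb)
    (tendsto_inv_atTop_zero.comp (tendsto_id.const_mul_atTop (by norm_num : (0 : ℝ) < 8)))

end Hurwitz

section Stirling

open Real Stirling

def lerchApprox (a : ℝ) (N : ℕ) : ℝ :=
  (a + N) * log (a + N) - (a + N) - log (a + N) / 2 - ∑ k ∈ Finset.range N, log (a + k)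

lemma lerchApprox_eq_logGammaSeq_add {a : ℝ} (ha : 0 < a) {N : ℕ} (hN : N ≠ 0) :
    lerchApprox a N = BohrMollerup.logGammaSeq a N + (N + (a + 2⁻¹)) * log (1 + a / N) - a
      - log 2 / 2 - log (stirlingSeq N) := by
  have hN₀ : (0 : ℝ) < N := Nat.cast_pos.mpr (Nat.pos_of_ne_zero hN)
  have hlog : log (1 + a / N) = log (a + N) - log N := by
    rw [← log_div (by positivity) hN₀.ne']
    congr 1
    field_simp
    ring
  rw [lerchApprox, BohrMollerup.logGammaSeq, log_stirlingSeq_formula, Finset.sum_range_succ, hlog,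
    log_mul two_ne_zero hN₀.ne', log_div hN₀.ne' (exp_pos 1).ne', log_exp]
  ring

lemma tendsto_add_mul_log_one_add_div (a c : ℝ) :
    Tendsto (fun N : ℕ => (N + c) * log (1 + a / N)) atTop (𝓝 a) := by
  have hmain := (tendsto_mul_log_one_add_div_atTop a).comp tendsto_natCast_atTop_atTop
  have hone : Tendsto (fun N : ℕ => 1 + a / N) atTop (𝓝 1) := by
    simpa using (tendsto_const_div_atTop_nhds_zero_nat a).const_add 1
  have hlog : Tendsto (fun N : ℕ => log (1 + a / N)) atTop (𝓝 0) := by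
    simpa [Function.comp_def] using (continuousAt_log one_ne_zero).tendsto.comp hone
  simpa [add_mul] using hmain.add (hlog.const_mul c)

theorem tendsto_lerchApprox {a : ℝ} (ha : 0 < a) :
    Tendsto (lerchApprox a) atTop (𝓝 (log (Gamma a) - log (2 * π) / 2)) := by
  have hstirling : Tendsto (fun N => log (stirlingSeq N)) atTop (𝓝 (log π / 2)) := by
    rw [← log_sqrt pi_pos.le]
    exact (continuousAt_log (by positivity)).tendsto.comp tendsto_stirlingSeq_sqrt_pi
  have h := ((((BohrMollerup.tendsto_log_gamma ha).add
    (tendsto_add_mul_log_one_add_div a (a + 2⁻¹))).sub_const a).sub_const (log 2 / 2)).sub hstirling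
  convert h.congr' ?_ using 2
  · rw [log_mul two_ne_zero pi_pos.ne']
    ring
  · filter_upwards [eventually_ne_atTop 0] with N hN using
      (lerchApprox_eq_logGammaSeq_add ha hN).symm

end Stirling

section Derivative

open Complex

variable {a : ℝ} {F : ℂ → ℂ}

lemma sub_sum_range_eq_hurwitzContinuation (ha : 0 < a) {s z : ℂ} (hs : 1 < s.re)
    (hz : HasSum (fun n : ℕ => ((a + n : ℝ) : ℂ) ^ (-s)) z) (N : ℕ) :
    z - ∑ k ∈ Finset.range N, ((a + k : ℝ) : ℂ) ^ (-s) = hurwitzContinuation (a + N) s := by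
  refine tendsto_nhds_unique ((hasSum_nat_add_iff' N).mpr hz).tendsto_sum_nat ?_
  convert tendsto_sum_range_cpow_hurwitzContinuation (b := a + N) (by positivity) hs using 4
  push_cast
  ring

theorem deriv_eq_lerchApprox_sub_hurwitzRemainder (ha : 0 < a)
    (hF : ∀ s : ℂ, s ≠ 1 → DifferentiableAt ℂ F s)
    (hF' : ∀ s : ℂ, 1 < s.re → HasSum (fun n : ℕ => 1 / ((n : ℂ) + (a : ℂ)) ^ s) (F s))
    (N : ℕ) : deriv F 0 = lerchApprox a N - hurwitzRemainder (a + N) 0 := by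
  set S : ℂ → ℂ := fun s => ∑ k ∈ Finset.range N, ((a + k : ℝ) : ℂ) ^ (-s)
  have hpos : ∀ k : ℕ, ((a + k : ℝ) : ℂ) ≠ 0 := fun k => ofReal_ne_zero.mpr (by positivity)
  have hS : HasDerivAt S (-∑ k ∈ Finset.range N, (Real.log (a + k) : ℂ)) 0 := by
    rw [← Finset.sum_neg_distrib]
    refine HasDerivAt.fun_sum fun k _ => ?_
    refine ((hasDerivAt_id' (0 : ℂ)).neg.const_cpow (.inl (hpos k))).congr_deriv ?_
    rw [Pi.neg_apply, neg_zero, cpow_zero, ofReal_log (by positivity)]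
    ring
  have hS_diff : ∀ s, DifferentiableAt ℂ S s := fun s =>
    DifferentiableAt.fun_sum fun k _ => differentiableAt_id.neg.const_cpow (.inl (hpos k))
  have hcont : ∀ s : ℂ, 1 < s.re → F s - S s = hurwitzContinuation (a + N) s := by
    intro s hs
    refine sub_sum_range_eq_hurwitzContinuation ha hs ((hF' s hs).congr_fun fun n => ?_) N
    rw [one_div, ← cpow_neg]
    push_cast
    ring_nf
  have hloc := eventuallyEq_nhds_zero_of_eq_of_one_lt_re (g := fun s => F s - S s)
    (fun s _ hs₁ => (hF s hs₁).sub (hS_diff s))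
    (fun s hs hs₁ => differentiableAt_hurwitzContinuation (by positivity) hs hs₁) hcont
  have hF₀ := (((hasDerivAt_hurwitzContinuation_zero (by positivity)).congr_of_eventuallyEq
    hloc).add hS).congr_of_eventuallyEq (.of_forall fun s => (sub_add_cancel (F s) (S s)).symm)
  rw [hF₀.deriv, lerchApprox]
  push_cast
  ring

end Derivative

end Lerch

open Lerch in
/-- Lerch's formula: ∂ζ/∂s(0, a) = log Γ(a) − (1/2) log(2π). -/
theorem hurwitzZeta_deriv_zero (a : ℝ) (ha : 0 < a) (F : ℂ → ℂ)
    (hF : ∀ s : ℂ, s ≠ 1 → DifferentiableAt ℂ F s)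
    (hF' : ∀ s : ℂ, 1 < s.re →
      HasSum (fun n : ℕ => 1 / ((n : ℂ) + (a : ℂ)) ^ s) (F s)) :
    deriv F 0 = (Real.log (Real.Gamma a) - Real.log (2 * Real.pi) / 2 : ℝ) := by
  have hshift : Tendsto (fun N : ℕ => a + N) atTop atTop :=
    tendsto_atTop_add_const_left _ a tendsto_natCast_atTop_atTop
  have hlim := ((Complex.continuous_ofReal.tendsto _).comp (tendsto_lerchApprox ha)).sub
    (tendsto_hurwitzRemainder_zero_atTop.comp hshift)
  rw [sub_zero] at hlim
  exact tendsto_nhds_unique (tendsto_const_nhds.congr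
    (deriv_eq_lerchApprox_sub_hurwitzRemainder ha hF hF')) hlim
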